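/- Let K be a field and A a positively graded, connected K-algebra (A is ℕ-graded with A₀ = K). Let M be a graded A-module with Mₙ = 0 for n < 0 and with Mₙ a finite-dimensional K-vector space for every n ≥ 0. Let x be a homogeneous element of positive degree in the maximal ideal of A which operates injectively on M by multiplication. Then M is a free K[x]-module, where K[x] is the (polynomial) subalgebra of A generated by x. -/

import Mathlib

/-!
In each degree `m` choose a `K`-complement `Cₘ` of `x • M_{m-d}` in `Mₘ`, and let `V` be the
`K`-span of all the `Cₘ`. Comparing homogeneous components, `V` meets `x • M` only in `0`. Hence a
`K`-basis of `V` is `K[X]`-independent: in a relation the constant coefficients give an element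
of `V ∩ x • M`, so they vanish, and cancelling `x` (which acts injectively) lowers all degrees.
Since `M` is bounded below and `x` raises degrees by `d > 0`, induction on the degree shows that
`V` generates `M` over `K[X]`.
-/

open Polynomial DirectSum

namespace DirectSum

variable {ι R M : Type*} [DecidableEq ι] [Semiring R] [AddCommMonoid M] [Module R M]
  (ℳ : ι → Submodule R M) [Decomposition ℳ]

theorem decompose_coe_mem_of_mem_iSup {A : ι → Submodule R M} (hA : ∀ i, A i ≤ ℳ i) {v : M}
    (hv : v ∈ ⨆ i, A i) (i : ι) : (decompose ℳ v i : M) ∈ A i := by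
  induction hv using Submodule.iSup_induction' with
  | mem j v hv =>
    by_cases h : j = i
    · subst h
      rwa [decompose_of_mem_same ℳ (hA j hv)]
    · rw [decompose_of_mem_ne ℳ (hA j hv) h]
      exact zero_mem _
  | zero => simp
  | add v w _ _ hv hw =>
    rw [decompose_add, add_apply, Submodule.coe_add]
    exact add_mem hv hw

theorem disjoint_iSup_of_le_of_disjoint {A B : ι → Submodule R M} (hA : ∀ i, A i ≤ ℳ i)
    (hB : ∀ i, B i ≤ ℳ i) (hAB : ∀ i, Disjoint (A i) (B i)) :
    Disjoint (⨆ i, A i) (⨆ i, B i) := by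
  refine Submodule.disjoint_def.mpr fun v hvA hvB => (decompose ℳ).injective ?_
  ext i
  rw [decompose_zero, zero_apply, ZeroMemClass.coe_zero]
  exact Submodule.disjoint_def.mp (hAB i) _ (decompose_coe_mem_of_mem_iSup ℳ hA hvA i)
    (decompose_coe_mem_of_mem_iSup ℳ hB hvB i)

end DirectSum

section Polynomial

variable {R M : Type*} [CommRing R] [AddCommGroup M] [Module R[X] M] [Module R M]
  [IsScalarTower R R[X] M]

theorem Finsupp.linearCombination_eq_X_smul_add {ι : Type*} (b : ι → M) (l : ι →₀ R[X]) :
    Finsupp.linearCombination R[X] b l =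
      (X : R[X]) • Finsupp.linearCombination R[X] b (l.mapRange divX divX_zero) +
        Finsupp.linearCombination R b (l.mapRange (coeff · 0) (coeff_zero 0)) := by
  have hl : l = (X : R[X]) • l.mapRange divX divX_zero +
      (l.mapRange (coeff · 0) (coeff_zero 0)).mapRange C C_0 := by
    ext1 i
    simp [X_mul_divX_add]
  conv_lhs => rw [hl]
  rw [map_add, map_smul]
  congr 1
  rw [Finsupp.linearCombination_apply, Finsupp.linearCombination_apply,
    Finsupp.sum_mapRange_index fun i => zero_smul R[X] (b i)]
  simp_rw [← algebraMap_eq, algebraMap_smul]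

theorem linearIndependent_polynomial_of_disjoint_range_X_smul {ι : Type*} {b : ι → M}
    (hinj : Function.Injective ((X : R[X]) • · : M → M)) (hb : LinearIndependent R b)
    (hdisj : Disjoint (Submodule.span R (Set.range b))
      (LinearMap.range ((LinearMap.lsmul R[X] M X).restrictScalars R))) :
    LinearIndependent R[X] b := by
  have step : ∀ l : ι →₀ R[X], Finsupp.linearCombination R[X] b l = 0 →
      (∀ i, (l i).coeff 0 = 0) ∧
        Finsupp.linearCombination R[X] b (l.mapRange divX divX_zero) = 0 := by
    intro l hl
    rw [Finsupp.linearCombination_eq_X_smul_add] at hl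
    set u := Finsupp.linearCombination R[X] b (l.mapRange divX divX_zero)
    set c := Finsupp.linearCombination R b (l.mapRange (coeff · 0) (coeff_zero 0))
    have hc : c = 0 := by
      refine Submodule.disjoint_def.mp hdisj c
        (Finsupp.mem_span_range_iff_exists_finsupp.mpr ⟨_, rfl⟩) ⟨-u, ?_⟩
      simp [eq_neg_of_add_eq_zero_right hl]
    have hconst := linearIndependent_iff.mp hb _ hc
    refine ⟨fun i => by simpa using DFunLike.congr_fun hconst i, hinj ?_⟩
    simpa [hc] using hl
  rw [linearIndependent_iff]
  suffices ∀ n (l : ι →₀ R[X]), Finsupp.linearCombination R[X] b l = 0 →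
      ∀ i, (l i).coeff n = 0 from
    fun l hl => Finsupp.ext fun i => Polynomial.ext fun n => this n l hl i
  intro n
  induction n with
  | zero => exact fun l hl => (step l hl).1
  | succ n ih =>
    intro l hl i
    simpa [coeff_divX] using ih _ (step l hl).2 i

end Polynomial

theorem Submodule.eq_top_of_le_map_sup {K M : Type*} [Semiring K] [AddCommMonoid M] [Module K M]
    (ℳ : ℤ → Submodule K M) (hℳ : ⨆ m, ℳ m = ⊤) (hneg : ∀ q < 0, ℳ q = ⊥) {d : ℕ}
    (hd : 0 < d) (f : M →ₗ[K] M) {P : Submodule K M} (hP : P ≤ P.comap f)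
    (h : ∀ m, ℳ m ≤ (ℳ (m - d)).map f ⊔ P) : P = ⊤ := by
  have key : ∀ n : ℕ, ∀ m : ℤ, m < n → ℳ m ≤ P := by
    intro n
    induction n with
    | zero => exact fun m hm => (hneg m (mod_cast hm)).trans_le bot_le
    | succ n ih =>
      intro m hm
      refine (h m).trans (sup_le ?_ le_rfl)
      exact Submodule.map_le_iff_le_comap.mpr ((ih (m - d) (by omega)).trans hP)
  rw [eq_top_iff, ← hℳ]
  exact iSup_le fun m => key (m.toNat + 1) m (by omega)

theorem Module.free_polynomial_of_graded {K M : Type*} [Field K] [AddCommGroup M] [Module K M]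
    [Module K[X] M] [IsScalarTower K K[X] M]
    (ℳ : ℤ → Submodule K M) [Decomposition ℳ] (hneg : ∀ q < 0, ℳ q = ⊥) {d : ℕ} (hd : 0 < d)
    (hX : ∀ q, ∀ v ∈ ℳ q, (X : K[X]) • v ∈ ℳ (q + d))
    (hinj : Function.Injective ((X : K[X]) • · : M → M)) : Module.Free K[X] M := by
  set L := (LinearMap.lsmul K[X] M X).restrictScalars K
  have hℳ : ⨆ m, ℳ m = ⊤ := (Decomposition.isInternal ℳ).submodule_iSup_eq_top
  have hD : ∀ m, (ℳ (m - d)).map L ≤ ℳ m := by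
    rintro m _ ⟨v, hv, rfl⟩
    simpa [L] using hX _ v hv
  choose C hCle hCinf hCsup using
    fun m => Set.Iic.complementedLattice_iff.mp inferInstance _ (hD m)
  have hrange : LinearMap.range L ≤ ⨆ m, (ℳ (m - d)).map L := by
    rw [LinearMap.range_eq_map, ← hℳ, Submodule.map_iSup]
    exact iSup_le fun q => le_iSup_of_le (q + d) (by simp)
  have hV : Disjoint (⨆ m, C m) (LinearMap.range L) :=
    (disjoint_iSup_of_le_of_disjoint ℳ hCle hD fun m =>
      (disjoint_iff.mpr (hCinf m)).symm).mono_right hrange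
  obtain ⟨s, -, hspan, hli⟩ := exists_linearIndependent K ((⨆ m, C m : Submodule K M) : Set M)
  rw [Submodule.span_eq] at hspan
  have hliX : LinearIndependent K[X] ((↑) : s → M) :=
    linearIndependent_polynomial_of_disjoint_range_X_smul hinj hli
      (by rwa [Subtype.range_coe, hspan])
  have hspanX : Submodule.span K[X] (Set.range ((↑) : s → M)) = ⊤ := by
    rw [Subtype.range_coe, ← Submodule.restrictScalars_eq_top_iff K]
    refine Submodule.eq_top_of_le_map_sup ℳ hℳ hneg hd L (fun v hv => Submodule.smul_mem _ X hv)
      fun m => ?_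
    rw [← hCsup m]
    refine sup_le_sup_left ((le_iSup C m).trans ?_) _
    rw [← hspan]
    exact Submodule.span_le_restrictScalars K K[X] s
  exact Module.Free.of_basis (Module.Basis.mk hliX hspanX.ge)

theorem free_over_polynomial_subalgebra_of_injective_smul_general
    (K : Type) [Field K] (A : Type) [Ring A] [Algebra K A]
    (𝒜 : ℕ → Submodule K A)
    (M : Type) [AddCommGroup M] [Module K M] [Module A M] [IsScalarTower K A M]
    (ℳ : ℤ → Submodule K M) [DirectSum.Decomposition ℳ]
    (hgraded : ∀ (p : ℕ) (q : ℤ) (a : A) (v : M), a ∈ 𝒜 p → v ∈ ℳ q → a • v ∈ ℳ (p + q))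
    (hneg : ∀ q : ℤ, q < 0 → ℳ q = ⊥)
    (d : ℕ) (hd : 0 < d) (x : A) (hx : x ∈ 𝒜 d)
    (hinj : Function.Injective (fun v : M => x • v)) :
    letI : Module (Polynomial K) M := Module.compHom M (Polynomial.aeval x).toRingHom
    Module.Free (Polynomial K) M := by
  let _ : Module K[X] M := Module.compHom M (aeval x).toRingHom
  have : IsScalarTower K K[X] M :=
    ⟨fun k p v => show aeval x (k • p) • v = k • aeval x p • v by rw [map_smul, smul_assoc]⟩
  have hX : ∀ v : M, (X : K[X]) • v = x • v := fun v =>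
    show aeval x X • v = x • v by rw [aeval_X]
  refine Module.free_polynomial_of_graded ℳ hneg hd (fun q v hv => ?_) (by simpa only [hX])
  rw [hX, add_comm]
  exact hgraded d q x v hx hv

theorem free_over_polynomial_subalgebra_of_injective_smul
    (K : Type) [Field K] (A : Type) [Ring A] [Algebra K A]
    (𝒜 : ℕ → Submodule K A) [GradedAlgebra 𝒜]
    (hconn : 𝒜 0 = (1 : Submodule K A))
    (M : Type) [AddCommGroup M] [Module K M] [Module A M] [IsScalarTower K A M]
    (ℳ : ℤ → Submodule K M) [DirectSum.Decomposition ℳ]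
    (hgraded : ∀ (p : ℕ) (q : ℤ) (a : A) (v : M), a ∈ 𝒜 p → v ∈ ℳ q → a • v ∈ ℳ (p + q))
    (hneg : ∀ q : ℤ, q < 0 → ℳ q = ⊥)
    (hfin : ∀ q : ℤ, FiniteDimensional K (ℳ q))
    (d : ℕ) (hd : 0 < d) (x : A) (hx : x ∈ 𝒜 d)
    (hinj : Function.Injective (fun v : M => x • v)) :
    letI : Module (Polynomial K) M := Module.compHom M (Polynomial.aeval x).toRingHom
    Module.Free (Polynomial K) M :=
  free_over_polynomial_subalgebra_of_injective_smul_general K A 𝒜 M ℳ hgraded hneg d hd x hx hinj
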